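/- If x is a positive integer that is not equal to l_a for any natural number a, then γ(x − l̃_{γ(x)}) ≤ γ(x) − 2. -/

import Mathlib

/-!
Write `g = γ(x)`. Maximality of `g` gives `x < l̃_{g+1}`, and for `g ≥ 3` the recurrence
`l̃_{g+1} = l̃_g + l̃_{g-1}` turns this into `x - l̃_g < l̃_{g-1}`, i.e. `γ(x - l̃_g) ≤ g - 2`.
A positive integer that is not a Lucas number avoids `1, 2, 3` and so is at least `l̃_3 = 4`,
which is exactly `g ≥ 3`.
-/

/-- The Lucas sequence: l 0 = 2, l 1 = 1, l (n+2) = l (n+1) + l n. -/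
def lucas : ℕ → ℕ
  | 0 => 2
  | 1 => 1
  | n + 2 => lucas (n + 1) + lucas n

/-- The modified (monotone) Lucas sequence: l̃ 0 = 1, l̃ 1 = 2, l̃ n = l n for n ≥ 2. -/
def ltil : ℕ → ℕ
  | 0 => 1
  | 1 => 2
  | n + 2 => lucas (n + 2)

/-- β x : minimal number of summands in a representation of x as a sum of
modified Lucas numbers (with repetitions allowed). -/
noncomputable def beta (x : ℕ) : ℕ :=
  sInf {s : ℕ | ∃ k : ℕ, ∃ b : ℕ → ℕ,
    x = ∑ i ∈ Finset.range (k + 1), b i * ltil i ∧ s = ∑ i ∈ Finset.range (k + 1), b i}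

/-- γ x : the greatest k with l̃ k ≤ x (for x ≥ 1). -/
noncomputable def gamma (x : ℕ) : ℕ := sSup {k : ℕ | ltil k ≤ x}

/-- S a : the additive submonoid of ℕ generated by {l_a} ∪ {l_a + l_n : n ∈ ℕ}. -/
def Sset (a : ℕ) : AddSubmonoid ℕ :=
  AddSubmonoid.closure ({lucas a} ∪ {x : ℕ | ∃ n : ℕ, x = lucas a + lucas n})

/-- T a : the additive submonoid of ℕ generated by {l_a + l_n : n ∈ ℕ}. -/
def Tset (a : ℕ) : AddSubmonoid ℕ :=
  AddSubmonoid.closure {x : ℕ | ∃ n : ℕ, x = lucas a + lucas n}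

lemma lucas_pos : ∀ n, 0 < lucas n
  | 0 | 1 => by simp [lucas]
  | n + 2 => Nat.add_pos_left (lucas_pos (n + 1)) _

lemma ltil_add_four (n : ℕ) : ltil (n + 4) = ltil (n + 3) + ltil (n + 2) := rfl

lemma ltil_lt_ltil_succ : ∀ k, ltil k < ltil (k + 1)
  | 0 | 1 => by simp [ltil, lucas]
  | k + 2 => Nat.lt_add_of_pos_right (lucas_pos (k + 1))

lemma ltil_strictMono : StrictMono ltil := strictMono_nat_of_lt_succ ltil_lt_ltil_succ

lemma ltil_le_iff_le_gamma {x k : ℕ} (hx : 0 < x) : ltil k ≤ x ↔ k ≤ gamma x := by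
  have hbdd : BddAbove {k | ltil k ≤ x} := ⟨x, fun k hk => ltil_strictMono.le_apply.trans hk⟩
  exact ⟨fun hk => le_csSup hbdd hk,
    fun hk => (ltil_strictMono.monotone hk).trans (Nat.sSup_mem ⟨0, hx⟩ hbdd)⟩

lemma lt_ltil_gamma_succ {x : ℕ} (hx : 0 < x) : x < ltil (gamma x + 1) :=
  not_le.mp fun h => (Nat.lt_succ_self _).not_ge ((ltil_le_iff_le_gamma hx).mp h)

lemma gamma_le_of_lt_ltil_succ {x k : ℕ} (h : x < ltil (k + 1)) : gamma x ≤ k :=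
  csSup_le' fun _ hj => Nat.lt_succ_iff.mp (ltil_strictMono.lt_iff_lt.mp (hj.trans_lt h))

lemma gamma_sub_ltil_gamma_le {x : ℕ} (hx : 0 < x) (hg : 3 ≤ gamma x) :
    gamma (x - ltil (gamma x)) ≤ gamma x - 2 := by
  obtain ⟨m, hm⟩ : ∃ m, gamma x = m + 3 := Nat.exists_eq_add_of_le' hg
  have h_le : ltil (m + 3) ≤ x := (ltil_le_iff_le_gamma hx).mpr hm.ge
  have h_lt : x < ltil (m + 3) + ltil (m + 2) := by
    rw [← ltil_add_four]
    simpa only [hm] using lt_ltil_gamma_succ hx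
  rw [hm]
  exact gamma_le_of_lt_ltil_succ (Nat.sub_lt_left_of_lt_add h_le h_lt)

theorem gamma_drop (x : ℕ) (hx : 0 < x) (h : ∀ a : ℕ, x ≠ lucas a) :
    gamma (x - ltil (gamma x)) ≤ gamma x - 2 := by
  have h_four : ltil 3 ≤ x := by
    have hne1 := h 1
    have hne2 := h 0
    have hne3 := h 2
    simp only [ltil, lucas] at hne1 hne2 hne3 ⊢
    omega
  exact gamma_sub_ltil_gamma_le hx ((ltil_le_iff_le_gamma hx).mp h_four)
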